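/- arXiv:1405.1856 — 2 statements merged into one kernel-verified Lean document; each statement's English description precedes it below -/
import Mathlib

section
/- Adjoint equation solution for the trajectory-based optimization of the linear model: let γ > 0, m ≥ 1, let A be the matrix [[−1−γ/2, γ/2],[γ/2, −1−γ/2]], let z(t) = (c₁·e^{−t} + c₂·e^{(−1−γ)t}, c₁·e^{−t} − c₂·e^{(−1−γ)t}) be a solution of ż = Az, and set ξ = (1+γ)^{2m−1}. Then λ(t) = (c₃·e^{t} + c₄·e^{(1+γ)t} + c₁·e^{−t} + ξ·c₂·e^{(−1−γ)t}, c₃·e^{t} − c₄·e^{(1+γ)t} + c₁·e^{−t} − ξ·c₂·e^{(−1−γ)t}) solves the adjoint differential equation ∂_t λ(t) = −2·A^{2m}·z(t) − A·λ(t) (i.e. λ̇ = −∂H/∂z for the Hamiltonian H(z, λ) = ‖A^m z‖₂² + λᵀAz, using that A is symmetric) for all constants c₃, c₄ ∈ ℝ. -/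
open Real Matrix

/-!
Both `z` and `λ` are combinations of the two eigenvectors `(1, 1)` and `(1, -1)` of `A`, with
eigenvalues `-1` and `-(1 + γ)`. In this basis the state equation and the adjoint equation
decouple into scalar equations for exponentials; the only nontrivial coefficient check is
`(1 + γ) ^ (2 m) = (1 + γ) ξ`.
-/

theorem Matrix.pow_mulVec_of_mulVec_eq_smul {n R : Type*} [Fintype n] [DecidableEq n]
    [CommSemiring R] {A : Matrix n n R} {v : n → R} {μ : R} (h : A *ᵥ v = μ • v) (k : ℕ) :
    (A ^ k) *ᵥ v = μ ^ k • v := by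
  induction k with
  | zero => simp
  | succ k ih => rw [pow_succ', ← mulVec_mulVec, ih, mulVec_smul, h, smul_smul, pow_succ]

theorem Matrix.pow_mulVec_add_of_eigenvectors {n R : Type*} [Fintype n] [DecidableEq n]
    [CommSemiring R] {A : Matrix n n R} {u w : n → R} {μ ν : R}
    (hu : A *ᵥ u = μ • u) (hw : A *ᵥ w = ν • w) (k : ℕ) (a b : R) :
    (A ^ k) *ᵥ (a • u + b • w) = (μ ^ k * a) • u + (ν ^ k * b) • w := by
  rw [mulVec_add, mulVec_smul, mulVec_smul, pow_mulVec_of_mulVec_eq_smul hu,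
    pow_mulVec_of_mulVec_eq_smul hw, smul_smul, smul_smul, mul_comm a, mul_comm b]

theorem hasDerivAt_const_mul_exp_mul (c a t : ℝ) :
    HasDerivAt (fun t => c * exp (a * t)) (a * (c * exp (a * t))) t := by
  simpa [mul_comm, mul_left_comm] using ((hasDerivAt_mul_const a).exp).const_mul c

theorem hasDerivAt_smul_add_smul {E : Type*} [NormedAddCommGroup E] [NormedSpace ℝ E]
    {f g : ℝ → ℝ} {f' g' t : ℝ} (u w : E) (hf : HasDerivAt f f' t)
    (hg : HasDerivAt g g' t) :
    HasDerivAt (fun t => f t • u + g t • w) (f' • u + g' • w) t :=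
  (hf.smul_const u).add (hg.smul_const w)

section Model

variable (γ : ℝ)

theorem modelMatrix_mulVec_one_one :
    !![-1 - γ / 2, γ / 2; γ / 2, -1 - γ / 2] *ᵥ ![1, 1] = (-1 : ℝ) • ![1, 1] := by
  ext i; fin_cases i <;> simp [mulVec, dotProduct]

theorem modelMatrix_mulVec_one_neg_one :
    !![-1 - γ / 2, γ / 2; γ / 2, -1 - γ / 2] *ᵥ ![1, -1] = (-(1 + γ)) • ![1, -1] := by
  ext i; fin_cases i <;> simp [mulVec, dotProduct] <;> ring

theorem vecCons_eq_smul_add_smul (p q : ℝ) :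
    ![p + q, p - q] = p • ![1, 1] + q • ![1, -1] := by
  ext i; fin_cases i <;> simp [sub_eq_add_neg]

end Model

theorem stmt15_general (γ : ℝ) (m : ℕ) (hm : 1 ≤ m) (c₁ c₂ c₃ c₄ : ℝ)
    (A : Matrix (Fin 2) (Fin 2) ℝ) (hA : A = !![-1 - γ / 2, γ / 2; γ / 2, -1 - γ / 2])
    (ξ : ℝ) (hξ : ξ = (1 + γ) ^ (2 * m - 1))
    (z lam : ℝ → Fin 2 → ℝ)
    (hz : ∀ t : ℝ, z t = ![c₁ * exp (-t) + c₂ * exp ((-1 - γ) * t),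
                           c₁ * exp (-t) - c₂ * exp ((-1 - γ) * t)])
    (hlam : ∀ t : ℝ,
      lam t = ![c₃ * exp t + c₄ * exp ((1 + γ) * t) + c₁ * exp (-t)
                  + ξ * c₂ * exp ((-1 - γ) * t),
                c₃ * exp t - c₄ * exp ((1 + γ) * t) + c₁ * exp (-t)
                  - ξ * c₂ * exp ((-1 - γ) * t)]) :
    (∀ t : ℝ, HasDerivAt z (A.mulVec (z t)) t) ∧
    (∀ t : ℝ,
      HasDerivAt lam ((-2 : ℝ) • (A ^ (2 * m)).mulVec (z t) - A.mulVec (lam t)) t) := by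
  set u : Fin 2 → ℝ := ![1, 1]
  set w : Fin 2 → ℝ := ![1, -1]
  have hu : A *ᵥ u = (-1 : ℝ) • u := hA ▸ modelMatrix_mulVec_one_one γ
  have hw : A *ᵥ w = (-(1 + γ)) • w := hA ▸ modelMatrix_mulVec_one_neg_one γ
  have hμ : (-1 : ℝ) ^ (2 * m) = 1 := (even_two_mul m).neg_one_pow
  have hν : (-(1 + γ)) ^ (2 * m) = (1 + γ) * ξ := by
    rw [(even_two_mul m).neg_pow, hξ, ← pow_succ', Nat.sub_add_cancel (by omega)]
  have hz' : z = fun t => (c₁ * exp (-1 * t)) • u + (c₂ * exp ((-1 - γ) * t)) • w := by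
    funext t
    rw [hz, neg_one_mul, vecCons_eq_smul_add_smul]
  have hlam' : lam = fun t => (c₃ * exp (1 * t) + c₁ * exp (-1 * t)) • u
      + (c₄ * exp ((1 + γ) * t) + ξ * c₂ * exp ((-1 - γ) * t)) • w := by
    funext t
    rw [hlam, one_mul, neg_one_mul, ← vecCons_eq_smul_add_smul]
    ext i; fin_cases i <;> simp <;> ring
  have hexp := hasDerivAt_const_mul_exp_mul
  refine ⟨fun t => ?_, fun t => ?_⟩
  · subst hz'
    beta_reduce
    rw [← pow_one A, pow_mulVec_add_of_eigenvectors hu hw]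
    exact (hasDerivAt_smul_add_smul u w (hexp c₁ (-1) t) (hexp c₂ (-1 - γ) t)).congr_deriv
      (by module)
  · subst hz' hlam'
    beta_reduce
    rw [pow_mulVec_add_of_eigenvectors hu hw, ← pow_one A, pow_mulVec_add_of_eigenvectors hu hw,
      hμ, hν]
    exact (hasDerivAt_smul_add_smul u w ((hexp c₃ 1 t).add (hexp c₁ (-1) t))
      ((hexp c₄ (1 + γ) t).add (hexp (ξ * c₂) (-1 - γ) t))).congr_deriv (by module)

/-- Adjoint equation solution for the trajectory-based optimization of
the linear model: with A = [[−1−γ/2, γ/2],[γ/2, −1−γ/2]], ξ = (1+γ)^{2m−1}, and z the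
general solution of ż = Az, the function
λ(t) = (c₃e^{t} + c₄e^{(1+γ)t} + c₁e^{−t} + ξc₂e^{(−1−γ)t},
        c₃e^{t} − c₄e^{(1+γ)t} + c₁e^{−t} − ξc₂e^{(−1−γ)t})
solves the adjoint equation ∂_t λ = −2·A^{2m}·z − A·λ for all c₃, c₄ ∈ ℝ. -/
theorem stmt15 (γ : ℝ) (hγ : 0 < γ) (m : ℕ) (hm : 1 ≤ m) (c₁ c₂ c₃ c₄ : ℝ)
    (A : Matrix (Fin 2) (Fin 2) ℝ) (hA : A = !![-1 - γ / 2, γ / 2; γ / 2, -1 - γ / 2])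
    (ξ : ℝ) (hξ : ξ = (1 + γ) ^ (2 * m - 1))
    (z lam : ℝ → Fin 2 → ℝ)
    (hz : ∀ t : ℝ, z t = ![c₁ * exp (-t) + c₂ * exp ((-1 - γ) * t),
                           c₁ * exp (-t) - c₂ * exp ((-1 - γ) * t)])
    (hlam : ∀ t : ℝ,
      lam t = ![c₃ * exp t + c₄ * exp ((1 + γ) * t) + c₁ * exp (-t)
                  + ξ * c₂ * exp ((-1 - γ) * t),
                c₃ * exp t - c₄ * exp ((1 + γ) * t) + c₁ * exp (-t)
                  - ξ * c₂ * exp ((-1 - γ) * t)]) :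
    (∀ t : ℝ, HasDerivAt z (A.mulVec (z t)) t) ∧
    (∀ t : ℝ,
      HasDerivAt lam ((-2 : ℝ) • (A ^ (2 * m)).mulVec (z t) - A.mulVec (lam t)) t) :=
  stmt15_general γ m hm c₁ c₂ c₃ c₄ A hA ξ hξ z lam hz hlam
end

section
/- Zero-Derivative Principle in boundary-value form for the linear model: let γ > 0, m ≥ 1, t₀ < t_f, β ∈ ℝ with β ≠ 0. The solution z of the linear model determined by the two conditions z₂(t_f) = β and ∂_t^m z₁(t₀) = 0 exists, is unique, and satisfies z₁(t_f) = β·[1 + 2(−1)^{m+1}·e^{(−1−γ)t_f}/((−1)^m·e^{(−1−γ)t_f} + (−1−γ)^m·e^{−γt₀}·e^{−t_f})]. Consequently z₁(t_f) → β in each of the three limits m → ∞ (γ, t₀, t_f, β fixed), t₀ → −∞ (γ, m, t_f, β fixed), and γ → ∞ (m, t₀ < t_f, β fixed). -/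
/-!
The sum `z₁ + z₂` and the difference `z₁ - z₂` satisfy scalar equations with rates `-1` and
`-1 - γ`, so every solution is `a` times the slow mode plus `b` times the fast mode. At `tf` the
condition `z₂(tf) = β` reads `a - b = β`, and `∂_t^m z₁(t₀) = 0` reads `a + R b = 0` with
`R = (1 + γ)^m e^{γ (tf - t₀)} > 0`. This system has the unique solution
`a = β R / (1 + R)`, `b = -β / (1 + R)`, whence `z₁(tf) = a + b = β (1 - 2 / (1 + R))`, and the
stated formula is this expression in disguise. Each of the three limits sends `R` to `+∞`.
-/

open Real Filter Topology

theorem eq_mul_exp_of_hasDerivAt {f : ℝ → ℝ} {k : ℝ} (hf : ∀ t, HasDerivAt f (k * f t) t)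
    (s t : ℝ) : f t = f s * exp (k * (t - s)) := by
  have hconst : ∀ t, HasDerivAt (fun t => f t * exp (-k * t)) 0 t := fun t => by
    have he : HasDerivAt (fun t : ℝ => exp (-k * t)) (exp (-k * t) * (-k)) t := by
      simpa using ((hasDerivAt_id t).const_mul (-k)).exp
    exact ((hf t).mul he).congr_deriv (by ring)
  have h := is_const_of_deriv_eq_zero (fun x => (hconst x).differentiableAt)
    (fun x => (hconst x).deriv) t s
  have hk : exp (k * (t - s)) = exp (-k * s) * exp (k * t) := by rw [← exp_add]; ring_nf
  rw [hk, ← mul_assoc, ← h, mul_assoc, ← exp_add]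
  simp

theorem iteratedDeriv_mul_exp_add_mul_exp (a b r q s : ℝ) (m : ℕ) (t : ℝ) :
    iteratedDeriv m (fun t => a * exp (r * (t - s)) + b * exp (q * (t - s))) t
      = a * r ^ m * exp (r * (t - s)) + b * q ^ m * exp (q * (t - s)) := by
  rw [iteratedDeriv_fun_add (by fun_prop) (by fun_prop), iteratedDeriv_const_mul_field,
    iteratedDeriv_const_mul_field, iteratedDeriv_comp_sub_const (f := fun t => exp (r * t)),
    iteratedDeriv_comp_sub_const (f := fun t => exp (q * t))]
  simp only [iteratedDeriv_exp_const_mul]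
  ring

theorem tendsto_mul_one_sub_two_div {α : Type*} {l : Filter α} {R : α → ℝ}
    (hR : Tendsto R l atTop) (β : ℝ) : Tendsto (fun x => β * (1 - 2 / (1 + R x))) l (𝓝 β) := by
  have h : Tendsto (fun x => 2 / (1 + R x)) l (𝓝 0) :=
    tendsto_const_nhds.div_atTop (tendsto_atTop_add_const_left _ 1 hR)
  simpa using ((tendsto_const_nhds (x := (1 : ℝ))).sub h).const_mul β

noncomputable section

namespace LinearModel

def IsSol (γ : ℝ) (z₁ z₂ : ℝ → ℝ) : Prop :=
  ∀ t : ℝ,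
    HasDerivAt z₁ ((-1 - γ / 2) * z₁ t + (γ / 2) * z₂ t) t ∧
    HasDerivAt z₂ ((γ / 2) * z₁ t + (-1 - γ / 2) * z₂ t) t

/-- The solution with slow-mode amplitude `a` and fast-mode amplitude `b` at time `s`. -/
def modeSol (γ s a b : ℝ) : (ℝ → ℝ) × (ℝ → ℝ) :=
  (fun t => a * exp (-1 * (t - s)) + b * exp ((-1 - γ) * (t - s)),
   fun t => a * exp (-1 * (t - s)) - b * exp ((-1 - γ) * (t - s)))

variable {γ : ℝ}

theorem isSol_modeSol (s a b : ℝ) : IsSol γ (modeSol γ s a b).1 (modeSol γ s a b).2 := by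
  intro t
  have he : ∀ r, HasDerivAt (fun t => exp (r * (t - s))) (exp (r * (t - s)) * r) t := fun r => by
    simpa using (((hasDerivAt_id t).sub_const s).const_mul r).exp
  exact ⟨(((he _).const_mul a).add ((he _).const_mul b)).congr_deriv (by simp only [modeSol]; ring),
    (((he _).const_mul a).sub ((he _).const_mul b)).congr_deriv (by simp only [modeSol]; ring)⟩

theorem modeSol_snd_self (s a b : ℝ) : (modeSol γ s a b).2 s = a - b := by
  simp [modeSol]

/-- `z₁ + z₂` and `z₁ - z₂` decouple into the modes `e^{-t}` and `e^{(-1-γ)t}`. -/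
theorem eq_modeSol_of_isSol {z : (ℝ → ℝ) × (ℝ → ℝ)} (hz : IsSol γ z.1 z.2) (s : ℝ) :
    z = modeSol γ s ((z.1 s + z.2 s) / 2) ((z.1 s - z.2 s) / 2) := by
  have hsum := eq_mul_exp_of_hasDerivAt (f := fun t => z.1 t + z.2 t) (k := -1)
    (fun t => ((hz t).1.add (hz t).2).congr_deriv (by ring)) s
  have hdiff := eq_mul_exp_of_hasDerivAt (f := fun t => z.1 t - z.2 t) (k := -1 - γ)
    (fun t => ((hz t).1.sub (hz t).2).congr_deriv (by ring)) s
  ext t <;> simp only [modeSol]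
  · linear_combination (hsum t + hdiff t) / 2
  · linear_combination (hsum t - hdiff t) / 2

theorem iteratedDeriv_modeSol_fst (s a b : ℝ) (m : ℕ) (t : ℝ) :
    iteratedDeriv m (modeSol γ s a b).1 t
      = (-1) ^ m * exp (-1 * (t - s)) * (a + (1 + γ) ^ m * exp (-γ * (t - s)) * b) := by
  rw [modeSol, iteratedDeriv_mul_exp_add_mul_exp, show -1 - γ = -1 * (1 + γ) by ring, mul_pow,
    show -1 * (1 + γ) * (t - s) = -1 * (t - s) + -γ * (t - s) by ring, exp_add]
  ring

/-- The ratio of the slow to the fast component of `z₁` at `tf` imposed by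
`∂_t^m z₁(t₀) = 0`. -/
def slowFastRatio (γ : ℝ) (m : ℕ) (t₀ tf : ℝ) : ℝ := (1 + γ) ^ m * exp (γ * (tf - t₀))

theorem slowFastRatio_pos (hγ : -1 < γ) (m : ℕ) (t₀ tf : ℝ) : 0 < slowFastRatio γ m t₀ tf := by
  have : 0 < 1 + γ := by linarith
  unfold slowFastRatio; positivity

def bvpSol (γ : ℝ) (m : ℕ) (t₀ tf β : ℝ) : (ℝ → ℝ) × (ℝ → ℝ) :=
  modeSol γ tf (β * slowFastRatio γ m t₀ tf / (1 + slowFastRatio γ m t₀ tf))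
    (-β / (1 + slowFastRatio γ m t₀ tf))

theorem iteratedDeriv_modeSol_fst_eq_zero_iff (m : ℕ) (t₀ tf a b : ℝ) :
    iteratedDeriv m (modeSol γ tf a b).1 t₀ = 0 ↔ a + slowFastRatio γ m t₀ tf * b = 0 := by
  rw [iteratedDeriv_modeSol_fst, slowFastRatio, show -γ * (t₀ - tf) = γ * (tf - t₀) by ring]
  simp [exp_ne_zero]

theorem isSol_and_bc_iff (hγ : -1 < γ) (m : ℕ) (t₀ tf β : ℝ) (z : (ℝ → ℝ) × (ℝ → ℝ)) :
    (IsSol γ z.1 z.2 ∧ z.2 tf = β ∧ iteratedDeriv m z.1 t₀ = 0) ↔ z = bvpSol γ m t₀ tf β := by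
  have hR : 1 + slowFastRatio γ m t₀ tf ≠ 0 := by
    linarith [slowFastRatio_pos hγ m t₀ tf]
  constructor
  · rintro ⟨hz, hβ, hd⟩
    obtain ⟨a, b, rfl⟩ : ∃ a b, z = modeSol γ tf a b := ⟨_, _, eq_modeSol_of_isSol hz tf⟩
    rw [modeSol_snd_self] at hβ
    rw [iteratedDeriv_modeSol_fst_eq_zero_iff] at hd
    rw [bvpSol]
    congr 1
    · field_simp
      linear_combination hd + slowFastRatio γ m t₀ tf * hβ
    · field_simp
      linear_combination hd - hβ
  · rintro rfl
    refine ⟨isSol_modeSol _ _ _, ?_, ?_⟩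
    · rw [bvpSol, modeSol_snd_self]
      field_simp
      ring
    · rw [bvpSol, iteratedDeriv_modeSol_fst_eq_zero_iff]
      field_simp
      ring

theorem bvpSol_fst_self (hγ : -1 < γ) (m : ℕ) (t₀ tf β : ℝ) :
    (bvpSol γ m t₀ tf β).1 tf = β * (1 - 2 / (1 + slowFastRatio γ m t₀ tf)) := by
  have hR := slowFastRatio_pos hγ m t₀ tf
  simp only [bvpSol, modeSol, sub_self, mul_zero, exp_zero, mul_one]
  field_simp
  ring

theorem formula_eq_mul_one_sub_two_div (γ : ℝ) (m : ℕ) (t₀ tf β : ℝ) :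
    β * (1 + 2 * (-1 : ℝ) ^ (m + 1) * exp ((-1 - γ) * tf)
        / ((-1 : ℝ) ^ m * exp ((-1 - γ) * tf) + (-1 - γ) ^ m * exp (-γ * t₀) * exp (-tf)))
      = β * (1 - 2 / (1 + slowFastRatio γ m t₀ tf)) := by
  have hexp : exp (-γ * t₀) * exp (-tf) = exp ((-1 - γ) * tf) * exp (γ * (tf - t₀)) := by
    rw [← exp_add, ← exp_add]; ring_nf
  have hden : (-1 : ℝ) ^ m * exp ((-1 - γ) * tf) + (-1 - γ) ^ m * exp (-γ * t₀) * exp (-tf)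
      = ((-1) ^ m * exp ((-1 - γ) * tf)) * (1 + slowFastRatio γ m t₀ tf) := by
    rw [slowFastRatio, mul_assoc, hexp, show -1 - γ = -1 * (1 + γ) by ring, mul_pow]
    ring
  have hnum : 2 * (-1 : ℝ) ^ (m + 1) * exp ((-1 - γ) * tf)
      = ((-1) ^ m * exp ((-1 - γ) * tf)) * (-2) := by ring
  rw [hden, hnum, mul_div_mul_left _ _ (by positivity)]
  ring

theorem tendsto_slowFastRatio_pow (hγ : 0 < γ) (t₀ tf : ℝ) :
    Tendsto (fun k => slowFastRatio γ k t₀ tf) atTop atTop :=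
  (tendsto_pow_atTop_atTop_of_one_lt (by linarith)).atTop_mul_const (exp_pos _)

theorem tendsto_slowFastRatio_atBot (hγ : 0 < γ) (m : ℕ) (tf : ℝ) :
    Tendsto (fun t₀ => slowFastRatio γ m t₀ tf) atBot atTop := by
  have hlin : Tendsto (fun t₀ => γ * (tf - t₀)) atBot atTop := by
    simpa only [sub_eq_add_neg] using
      (tendsto_atTop_add_const_left _ tf tendsto_neg_atBot_atTop).const_mul_atTop hγ
  exact (tendsto_exp_atTop.comp hlin).const_mul_atTop (by positivity)

theorem tendsto_slowFastRatio_gamma (m : ℕ) {t₀ tf : ℝ} (ht : t₀ < tf) :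
    Tendsto (fun γ => slowFastRatio γ m t₀ tf) atTop atTop := by
  have hexp : Tendsto (fun γ => exp (γ * (tf - t₀))) atTop atTop :=
    tendsto_exp_atTop.comp (tendsto_id.atTop_mul_const (by linarith))
  refine tendsto_atTop_mono' _ ?_ hexp
  filter_upwards [eventually_ge_atTop 0] with γ hγ
  exact le_mul_of_one_le_left (exp_pos _).le (one_le_pow₀ (by linarith))

end LinearModel

end

theorem stmt18_general (γ : ℝ) (hγ : 0 < γ) (m : ℕ) (t₀ tf β : ℝ)
    (ht : t₀ < tf) :
    (∃! z : (ℝ → ℝ) × (ℝ → ℝ),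
      (∀ t : ℝ,
        HasDerivAt z.1 ((-1 - γ / 2) * z.1 t + (γ / 2) * z.2 t) t ∧
        HasDerivAt z.2 ((γ / 2) * z.1 t + (-1 - γ / 2) * z.2 t) t) ∧
      z.2 tf = β ∧ iteratedDeriv m z.1 t₀ = 0) ∧
    (∀ z₁ z₂ : ℝ → ℝ,
      (∀ t : ℝ,
        HasDerivAt z₁ ((-1 - γ / 2) * z₁ t + (γ / 2) * z₂ t) t ∧
        HasDerivAt z₂ ((γ / 2) * z₁ t + (-1 - γ / 2) * z₂ t) t) →
      z₂ tf = β → iteratedDeriv m z₁ t₀ = 0 →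
      z₁ tf = β * (1 + 2 * (-1 : ℝ) ^ (m + 1) * exp ((-1 - γ) * tf)
        / ((-1 : ℝ) ^ m * exp ((-1 - γ) * tf)
            + (-1 - γ) ^ m * exp (-γ * t₀) * exp (-tf)))) ∧
    Tendsto (fun k : ℕ => β * (1 + 2 * (-1 : ℝ) ^ (k + 1) * exp ((-1 - γ) * tf)
        / ((-1 : ℝ) ^ k * exp ((-1 - γ) * tf)
            + (-1 - γ) ^ k * exp (-γ * t₀) * exp (-tf)))) atTop (nhds β) ∧
    Tendsto (fun s : ℝ => β * (1 + 2 * (-1 : ℝ) ^ (m + 1) * exp ((-1 - γ) * tf)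
        / ((-1 : ℝ) ^ m * exp ((-1 - γ) * tf)
            + (-1 - γ) ^ m * exp (-γ * s) * exp (-tf)))) atBot (nhds β) ∧
    Tendsto (fun g : ℝ => β * (1 + 2 * (-1 : ℝ) ^ (m + 1) * exp ((-1 - g) * tf)
        / ((-1 : ℝ) ^ m * exp ((-1 - g) * tf)
            + (-1 - g) ^ m * exp (-g * t₀) * exp (-tf)))) atTop (nhds β) := by
  simp only [LinearModel.formula_eq_mul_one_sub_two_div]
  have hγ' : -1 < γ := by linarith
  have hbvp := LinearModel.isSol_and_bc_iff hγ' m t₀ tf β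
  refine ⟨⟨LinearModel.bvpSol γ m t₀ tf β, (hbvp _).2 rfl, fun z hz => (hbvp z).1 hz⟩,
    fun z₁ z₂ hz h₂ hd => ?_,
    tendsto_mul_one_sub_two_div (LinearModel.tendsto_slowFastRatio_pow hγ t₀ tf) β,
    tendsto_mul_one_sub_two_div (LinearModel.tendsto_slowFastRatio_atBot hγ m tf) β,
    tendsto_mul_one_sub_two_div (LinearModel.tendsto_slowFastRatio_gamma m ht) β⟩
  rw [← LinearModel.bvpSol_fst_self hγ', ← (hbvp (z₁, z₂)).1 ⟨hz, h₂, hd⟩]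

/-- Zero-Derivative Principle in boundary-value form for the linear
model: the solution z of the linear model determined by z₂(t_f) = β and
∂_t^m z₁(t₀) = 0 exists, is unique, and satisfies
z₁(t_f) = β·[1 + 2(−1)^{m+1}e^{(−1−γ)t_f}/((−1)^m e^{(−1−γ)t_f} + (−1−γ)^m e^{−γt₀}e^{−t_f})];
moreover z₁(t_f) → β as m → ∞, as t₀ → −∞, and as γ → ∞. -/
theorem stmt18 (γ : ℝ) (hγ : 0 < γ) (m : ℕ) (hm : 1 ≤ m) (t₀ tf β : ℝ)
    (ht : t₀ < tf) (hβ : β ≠ 0) :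
    (∃! z : (ℝ → ℝ) × (ℝ → ℝ),
      (∀ t : ℝ,
        HasDerivAt z.1 ((-1 - γ / 2) * z.1 t + (γ / 2) * z.2 t) t ∧
        HasDerivAt z.2 ((γ / 2) * z.1 t + (-1 - γ / 2) * z.2 t) t) ∧
      z.2 tf = β ∧ iteratedDeriv m z.1 t₀ = 0) ∧
    (∀ z₁ z₂ : ℝ → ℝ,
      (∀ t : ℝ,
        HasDerivAt z₁ ((-1 - γ / 2) * z₁ t + (γ / 2) * z₂ t) t ∧
        HasDerivAt z₂ ((γ / 2) * z₁ t + (-1 - γ / 2) * z₂ t) t) →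
      z₂ tf = β → iteratedDeriv m z₁ t₀ = 0 →
      z₁ tf = β * (1 + 2 * (-1 : ℝ) ^ (m + 1) * exp ((-1 - γ) * tf)
        / ((-1 : ℝ) ^ m * exp ((-1 - γ) * tf)
            + (-1 - γ) ^ m * exp (-γ * t₀) * exp (-tf)))) ∧
    Tendsto (fun k : ℕ => β * (1 + 2 * (-1 : ℝ) ^ (k + 1) * exp ((-1 - γ) * tf)
        / ((-1 : ℝ) ^ k * exp ((-1 - γ) * tf)
            + (-1 - γ) ^ k * exp (-γ * t₀) * exp (-tf)))) atTop (nhds β) ∧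
    Tendsto (fun s : ℝ => β * (1 + 2 * (-1 : ℝ) ^ (m + 1) * exp ((-1 - γ) * tf)
        / ((-1 : ℝ) ^ m * exp ((-1 - γ) * tf)
            + (-1 - γ) ^ m * exp (-γ * s) * exp (-tf)))) atBot (nhds β) ∧
    Tendsto (fun g : ℝ => β * (1 + 2 * (-1 : ℝ) ^ (m + 1) * exp ((-1 - g) * tf)
        / ((-1 : ℝ) ^ m * exp ((-1 - g) * tf)
            + (-1 - g) ^ m * exp (-g * t₀) * exp (-tf)))) atTop (nhds β) :=
  stmt18_general γ hγ m t₀ tf β ht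
end
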